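/- arXiv:0908.1882 — 3 statements merged into one kernel-verified Lean document; each statement's English description precedes it below -/
import Mathlib

section
/- If U is a measure on ℝ⁺ with U([0,t]) ~ L(t) as t → ∞ for a slowly varying function L, and U has an ultimately monotone density u, then for every ε > 0, u(t) = o(t^{ε-1} L(t)) as t → ∞. -/
/-!
For large `t`, monotonicity of `u` traps `t u(t)` between `U[0,2t] - U[0,t]` and
`2 (U[0,t] - U[0,t/2])` (in one order or the other). Since `U[0,t] ~ L(t)` and
`L(2t) ~ L(t) ~ L(t/2)`, both increments are `o(L(t))`, so `u(t) = o(L(t)/t)`,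
and `1/t ≤ t^(ε-1)` for `t ≥ 1`.
-/

open MeasureTheory Filter Set Asymptotics

theorem Asymptotics.IsEquivalent.isLittleO_comp_mul_sub {F L : ℝ → ℝ} {c : ℝ} (hF : F ~[atTop] L)
    (hL : (fun x => L (c * x)) ~[atTop] L) (hc : 0 < c) :
    (fun t => F (c * t) - F t) =o[atTop] L := by
  have hFc : (fun t => F (c * t)) ~[atTop] L :=
    (hF.comp_tendsto (tendsto_id.const_mul_atTop hc)).trans hL
  exact (IsLittleO.sub hFc hF).congr_left fun t => by simp

theorem MonotoneOn.intervalIntegral_le_sub_mul {f : ℝ → ℝ} {a b : ℝ}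
    (hf : MonotoneOn f (Icc a b)) (hab : a ≤ b) : ∫ x in a..b, f x ≤ (b - a) * f b := by
  have hint : IntervalIntegrable f volume a b :=
    MonotoneOn.intervalIntegrable (by rwa [uIcc_of_le hab])
  simpa using intervalIntegral.integral_mono_on hab hint intervalIntegrable_const
    fun x hx => hf hx (right_mem_Icc.2 hab) hx.2

theorem MonotoneOn.sub_mul_le_intervalIntegral {f : ℝ → ℝ} {a b : ℝ}
    (hf : MonotoneOn f (Icc a b)) (hab : a ≤ b) : (b - a) * f a ≤ ∫ x in a..b, f x := by
  have hint : IntervalIntegrable f volume a b :=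
    MonotoneOn.intervalIntegrable (by rwa [uIcc_of_le hab])
  simpa using intervalIntegral.integral_mono_on hab intervalIntegrable_const hint
    fun x hx => hf (left_mem_Icc.2 hab) hx hx.1

theorem MonotoneOn.abs_mul_le {f : ℝ → ℝ} {t : ℝ} (hf : MonotoneOn f (Icc (t / 2) (2 * t)))
    (ht : 0 ≤ t) : |t * f t| ≤ |∫ x in t..2 * t, f x| + 2 * |∫ x in t / 2..t, f x| := by
  have hlow := (hf.mono (Icc_subset_Icc_right (by linarith))).intervalIntegral_le_sub_mul
    (by linarith : t / 2 ≤ t)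
  have hup := (hf.mono (Icc_subset_Icc_left (by linarith))).sub_mul_le_intervalIntegral
    (by linarith : t ≤ 2 * t)
  rw [abs_le]
  constructor <;> linarith [le_abs_self (∫ x in t..2 * t, f x), neg_abs_le (∫ x in t..2 * t, f x),
    le_abs_self (∫ x in t / 2..t, f x), neg_abs_le (∫ x in t / 2..t, f x)]

theorem abs_mul_le_of_monotoneOn_or_antitoneOn {f : ℝ → ℝ} {t : ℝ}
    (hf : MonotoneOn f (Icc (t / 2) (2 * t)) ∨ AntitoneOn f (Icc (t / 2) (2 * t))) (ht : 0 ≤ t) :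
    |t * f t| ≤ |∫ x in t..2 * t, f x| + 2 * |∫ x in t / 2..t, f x| := by
  rcases hf with hf | hf
  · exact hf.abs_mul_le ht
  · simpa [intervalIntegral.integral_neg, abs_neg] using hf.neg.abs_mul_le ht

theorem intervalIntegrable_of_frequently_integral_ne_zero {u : ℝ → ℝ}
    (h : ∃ᶠ t in atTop, ∫ s in (0 : ℝ)..t, u s ≠ 0) {b : ℝ} (hb : 0 ≤ b) :
    IntervalIntegrable u volume 0 b := by
  obtain ⟨t, hbt, ht⟩ := (h.and_eventually (eventually_ge_atTop b)).exists.imp fun _ h => h.symm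
  exact (intervalIntegral.intervalIntegrable_of_integral_ne_zero ht).mono_set
    (uIcc_subset_uIcc left_mem_uIcc (mem_uIcc_of_le hb hbt))

theorem isLittleO_id_mul_of_monotoneOn_or_antitoneOn {u L : ℝ → ℝ} {x₀ : ℝ}
    (hu : MonotoneOn u (Ioi x₀) ∨ AntitoneOn u (Ioi x₀))
    (hdouble : (fun t => ∫ x in t..2 * t, u x) =o[atTop] L)
    (hhalf : (fun t => ∫ x in t / 2..t, u x) =o[atTop] L) :
    (fun t => t * u t) =o[atTop] L := by
  refine IsBigO.trans_isLittleO (IsBigO.of_bound 1 ?_)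
    (hdouble.abs_left.add (hhalf.abs_left.const_mul_left 2))
  filter_upwards [eventually_gt_atTop (max (2 * x₀) 0)] with t ht
  rw [max_lt_iff] at ht
  have hsub : Icc (t / 2) (2 * t) ⊆ Ioi x₀ := fun s hs => by simp only [mem_Ioi]; linarith [hs.1]
  have := abs_mul_le_of_monotoneOn_or_antitoneOn (hu.imp (·.mono hsub) (·.mono hsub)) ht.2.le
  simpa [Real.norm_eq_abs] using this.trans (le_abs_self _)

theorem intervalIntegral_eq_sub_of_frequently_ne_zero {u V : ℝ → ℝ}
    (hV : ∀ t ≥ (0 : ℝ), V t = ∫ s in (0 : ℝ)..t, u s) (hne : ∃ᶠ t in atTop, V t ≠ 0) {a b : ℝ}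
    (ha : 0 ≤ a) (hb : 0 ≤ b) : ∫ s in a..b, u s = V b - V a := by
  have hint : ∃ᶠ t in atTop, ∫ s in (0 : ℝ)..t, u s ≠ 0 :=
    (hne.and_eventually (eventually_ge_atTop 0)).mono fun t ⟨ht, ht0⟩ => hV t ht0 ▸ ht
  rw [← intervalIntegral.integral_interval_sub_left
    (intervalIntegrable_of_frequently_integral_ne_zero hint hb)
    (intervalIntegrable_of_frequently_integral_ne_zero hint ha), hV a ha, hV b hb]

theorem isBigO_inv_rpow_atTop {s : ℝ} (hs : -1 ≤ s) :
    (fun t : ℝ => t⁻¹) =O[atTop] fun t => t ^ s := by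
  refine IsBigO.of_bound 1 ?_
  filter_upwards [eventually_ge_atTop 1] with t ht
  have ht0 : 0 < t := by linarith
  rw [one_mul, Real.norm_of_nonneg (inv_nonneg.2 ht0.le),
    Real.norm_of_nonneg (Real.rpow_nonneg ht0.le s), ← Real.rpow_neg_one]
  exact Real.rpow_le_rpow_of_exponent_le ht hs

theorem stmt1_general (L u : ℝ → ℝ) (U : Measure ℝ)
    (hL : ∀ t > (0:ℝ), Tendsto (fun x => L (t * x) / L x) atTop (nhds 1))
    (hdens : ∀ t ≥ (0:ℝ), (U (Set.Icc 0 t)).toReal = ∫ s in (0:ℝ)..t, u s)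
    (hmono : ∃ x₀ : ℝ, MonotoneOn u (Set.Ioi x₀) ∨ AntitoneOn u (Set.Ioi x₀))
    (hU : Tendsto (fun t => (U (Set.Icc 0 t)).toReal / L t) atTop (nhds 1)) :
    ∀ ε > (0:ℝ), (fun t => u t) =o[atTop] (fun t => t ^ (ε - 1) * L t) := by
  intro ε hε
  obtain ⟨x₀, hu⟩ := hmono
  set V : ℝ → ℝ := fun t => (U (Icc 0 t)).toReal
  have hV : V ~[atTop] L := isEquivalent_of_tendsto_one hU
  have hne : ∃ᶠ t in atTop, V t ≠ 0 :=
    (hU.eventually_ne one_ne_zero).frequently.mono fun t ht => (div_ne_zero_iff.1 ht).1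
  have hinc {a b : ℝ} (ha : 0 ≤ a) (hb : 0 ≤ b) : ∫ s in a..b, u s = V b - V a :=
    intervalIntegral_eq_sub_of_frequently_ne_zero hdens hne ha hb
  have hdouble : (fun t => ∫ x in t..2 * t, u x) =o[atTop] L := by
    refine (hV.isLittleO_comp_mul_sub (isEquivalent_of_tendsto_one (hL 2 two_pos)) two_pos).congr'
      ?_ .rfl
    filter_upwards [eventually_ge_atTop 0] with t ht
    rw [hinc ht (by linarith)]
  have hhalf : (fun t => ∫ x in t / 2..t, u x) =o[atTop] L := by
    refine (hV.isLittleO_comp_mul_sub (isEquivalent_of_tendsto_one (hL (1 / 2) one_half_pos))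
      one_half_pos).neg_left.congr' ?_ .rfl
    filter_upwards [eventually_ge_atTop 0] with t ht
    rw [hinc (by linarith) ht, one_div, inv_mul_eq_div, neg_sub]
  refine ((isBigO_inv_rpow_atTop (by linarith : -1 ≤ ε - 1)).mul_isLittleO
    (isLittleO_id_mul_of_monotoneOn_or_antitoneOn hu hdouble hhalf)).congr' ?_ .rfl
  filter_upwards [eventually_ne_atTop 0] with t ht
  exact inv_mul_cancel_left₀ ht (u t)

/-- If `U([0,t]) ~ L(t)` as `t → ∞` for a slowly varying `L`, and `U` has an
ultimately monotone density `u`, then `u(t) = o(t^(ε-1) L(t))` as `t → ∞` for every `ε > 0`. -/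
theorem stmt1 (L u : ℝ → ℝ) (U : Measure ℝ)
    (hL : ∀ t > (0:ℝ), Tendsto (fun x => L (t * x) / L x) atTop (nhds 1))
    (hLpos : ∀ᶠ x in atTop, 0 < L x)
    (hdens : ∀ t ≥ (0:ℝ), (U (Set.Icc 0 t)).toReal = ∫ s in (0:ℝ)..t, u s)
    (hmono : ∃ x₀ : ℝ, MonotoneOn u (Set.Ioi x₀) ∨ AntitoneOn u (Set.Ioi x₀))
    (hU : Tendsto (fun t => (U (Set.Icc 0 t)).toReal / L t) atTop (nhds 1)) :
    ∀ ε > (0:ℝ), (fun t => u t) =o[atTop] (fun t => t ^ (ε - 1) * L t) :=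
  stmt1_general L u U hL hdens hmono hU
end

section
/- For the exponential kernel k(t,x) = x^{-1}e^{-t/x} with base measure λ(dx) = (2√π)^{-1} x^{-1/2} e^{-1/x} dx, the posterior-tilted first moment satisfies T^{-1/2} ∫_{ℝ⁺} (1-e^{-T/x}) [γ + n(1 - e^{-Y/x})]^{-(1-σ)} (2√π)^{-1} x^{-1/2} e^{-1/x} dx → γ^{-(1-σ)} as T → ∞, for any fixed n ≥ 0, Y > 0, γ > 0 and σ ∈ [0,1). In particular the posterior mean cumulative hazard is asymptotically equal to the prior one. -/
/-!
Substituting `x = T / y` turns `T^{-1/2}` times the integral into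
`(2√π)⁻¹ ∫₀^∞ (1 - e^{-y}) y^{-3/2} e^{-y/T} [γ + n(1 - e^{-Yy/T})]^{-(1-σ)} dy`.
The tilting factor after `y^{-3/2}` is bounded by `γ^{-(1-σ)}` and tends to it pointwise, so by
dominated convergence the limit is `γ^{-(1-σ)} (2√π)⁻¹ ∫₀^∞ (1 - e^{-y}) y^{-3/2} dy`, and an
integration by parts identifies the last integral with `2 Γ(1/2) = 2√π`.
-/

open MeasureTheory Filter Set Real Topology

lemma one_sub_exp_neg_nonneg {y : ℝ} (hy : 0 ≤ y) : 0 ≤ 1 - exp (-y) := by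
  linarith [exp_le_one_iff.mpr (neg_nonpos.mpr hy)]

lemma one_sub_exp_neg_le_self (y : ℝ) : 1 - exp (-y) ≤ y := by
  linarith [one_sub_le_exp_neg y]

lemma one_sub_exp_neg_le_one (y : ℝ) : 1 - exp (-y) ≤ 1 := by
  linarith [exp_pos (-y)]

section

variable {s : ℝ}

theorem integrableOn_one_sub_exp_neg_mul_rpow (hs0 : 0 < s) (hs1 : s < 1) :
    IntegrableOn (fun y ↦ (1 - exp (-y)) * y ^ (-(s + 1))) (Ioi 0) := by
  have hmeas : AEStronglyMeasurable (fun y : ℝ ↦ (1 - exp (-y)) * y ^ (-(s + 1))) :=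
    (by fun_prop : Measurable _).aestronglyMeasurable
  rw [← Ioc_union_Ioi_eq_Ioi zero_le_one]
  refine IntegrableOn.union ?_ ?_
  · -- near `0`, `1 - e^{-y} ≤ y` leaves the integrable singularity `y^{-s}`
    have hint : IntegrableOn (fun y : ℝ ↦ y ^ (-s)) (Ioc 0 1) := by
      rw [← intervalIntegrable_iff_integrableOn_Ioc_of_le zero_le_one]
      exact intervalIntegral.intervalIntegrable_rpow' (by linarith)
    refine hint.integrable.mono' hmeas.restrict ?_
    filter_upwards [ae_restrict_mem measurableSet_Ioc] with y ⟨hy0, _⟩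
    rw [norm_of_nonneg (mul_nonneg (one_sub_exp_neg_nonneg hy0.le) (by positivity))]
    calc (1 - exp (-y)) * y ^ (-(s + 1)) ≤ y * y ^ (-(s + 1)) := by
          gcongr; exact one_sub_exp_neg_le_self y
      _ = y ^ (-s) := by rw [← rpow_one_add' hy0.le (by linarith)]; ring_nf
  · have hint : IntegrableOn (fun y : ℝ ↦ y ^ (-(s + 1))) (Ioi 1) :=
      integrableOn_Ioi_rpow_of_lt (by linarith) zero_lt_one
    refine hint.integrable.mono' hmeas.restrict ?_
    filter_upwards [ae_restrict_mem measurableSet_Ioi] with y (hy : 1 < y)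
    rw [norm_of_nonneg (mul_nonneg (one_sub_exp_neg_nonneg (by linarith)) (by positivity))]
    exact mul_le_of_le_one_left (by positivity) (one_sub_exp_neg_le_one y)

lemma tendsto_one_sub_exp_neg_mul_rpow_nhdsGT_zero (hs1 : s < 1) :
    Tendsto (fun y ↦ (1 - exp (-y)) * y ^ (-s)) (𝓝[>] 0) (𝓝 0) := by
  have hpow : Tendsto (fun y : ℝ ↦ y ^ (1 - s)) (𝓝[>] 0) (𝓝 0) := by
    simpa [zero_rpow (by linarith : 1 - s ≠ 0)] using
      ((continuousAt_rpow_const 0 (1 - s) (Or.inr (by linarith))).tendsto).mono_left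
        nhdsWithin_le_nhds
  refine tendsto_of_tendsto_of_tendsto_of_le_of_le' tendsto_const_nhds hpow ?_ ?_
  · filter_upwards [self_mem_nhdsWithin] with y (hy : 0 < y)
    exact mul_nonneg (one_sub_exp_neg_nonneg hy.le) (by positivity)
  · filter_upwards [self_mem_nhdsWithin] with y (hy : 0 < y)
    calc (1 - exp (-y)) * y ^ (-s) ≤ y * y ^ (-s) := by
          gcongr; exact one_sub_exp_neg_le_self y
      _ = y ^ (1 - s) := by rw [← rpow_one_add' hy.le (by linarith)]; ring_nf

theorem integral_one_sub_exp_neg_mul_rpow (hs0 : 0 < s) (hs1 : s < 1) :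
    ∫ y in Ioi 0, (1 - exp (-y)) * y ^ (-(s + 1)) = Gamma (1 - s) / s := by
  have hv : ∀ y ∈ Ioi (0 : ℝ), HasDerivAt (fun y ↦ y ^ (-s)) (-s * y ^ (-(s + 1))) y := by
    intro y hy
    convert hasDerivAt_rpow_const (p := -s) (Or.inl (ne_of_gt hy)) using 2
    ring_nf
  have hu : ∀ y ∈ Ioi (0 : ℝ), HasDerivAt (fun y ↦ 1 - exp (-y)) (exp (-y)) y := by
    intro y _
    simpa using ((hasDerivAt_neg y).exp).const_sub 1
  have hGamma : IntegrableOn (fun y ↦ exp (-y) * y ^ (-s)) (Ioi 0) := by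
    simpa using GammaIntegral_convergent (s := 1 - s) (by linarith)
  have hinfty : Tendsto (fun y ↦ (1 - exp (-y)) * y ^ (-s)) atTop (𝓝 0) := by
    simpa using (tendsto_const_nhds.sub tendsto_exp_neg_atTop_nhds_zero).mul
      (tendsto_rpow_neg_atTop hs0)
  have := integral_Ioi_mul_deriv_eq_deriv_mul hu hv
    (IntegrableOn.congr_fun ((integrableOn_one_sub_exp_neg_mul_rpow hs0 hs1).const_mul (-s))
      (fun y _ ↦ by simp only [Pi.mul_apply]; ring) measurableSet_Ioi)
    hGamma (tendsto_one_sub_exp_neg_mul_rpow_nhdsGT_zero hs1) hinfty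
  have hΓ : Gamma (1 - s) = ∫ y in Ioi 0, exp (-y) * y ^ (-s) := by
    rw [Gamma_eq_integral (by linarith)]; simp
  simp_rw [mul_left_comm _ (-s), integral_const_mul] at this
  rw [hΓ, eq_div_iff hs0.ne']
  linarith

end

theorem integral_Ioi_comp_div {E : Type*} [NormedAddCommGroup E] [NormedSpace ℝ E]
    (g : ℝ → E) {T : ℝ} (hT : 0 < T) :
    ∫ y in Ioi 0, (T / y ^ 2) • g (T / y) = ∫ x in Ioi 0, g x := by
  have himg : (T / ·) '' Ioi 0 = Ioi 0 := by
    refine (image_subset_iff.mpr fun y (hy : 0 < y) ↦ div_pos hT hy).antisymm fun x hx ↦ ?_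
    exact ⟨T / x, div_pos hT hx, div_div_cancel₀ hT.ne'⟩
  have hderiv : ∀ y ∈ Ioi (0 : ℝ), HasDerivWithinAt (T / ·) (-(T / y ^ 2)) (Ioi 0) y := by
    intro y hy
    have := ((hasDerivAt_inv (ne_of_gt hy)).const_mul T).hasDerivWithinAt (s := Ioi 0)
    simpa only [← div_eq_mul_inv, mul_neg] using this
  have hinj : InjOn (T / ·) (Ioi (0 : ℝ)) := fun a _ b _ hab ↦
    inv_injective (mul_left_cancel₀ hT.ne' (by simpa [div_eq_mul_inv] using hab))
  calc ∫ y in Ioi 0, (T / y ^ 2) • g (T / y) = ∫ y in Ioi 0, |-(T / y ^ 2)| • g (T / y) :=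
        setIntegral_congr_fun measurableSet_Ioi fun y (hy : 0 < y) ↦ by
          rw [abs_neg, abs_of_pos (by positivity)]
    _ = ∫ x in (T / ·) '' Ioi 0, g x :=
        (integral_image_eq_integral_abs_deriv_smul measurableSet_Ioi hderiv hinj g).symm
    _ = ∫ x in Ioi 0, g x := by rw [himg]

theorem tendsto_integral_mul_of_tendsto_of_norm_le {α ι : Type*} [MeasurableSpace α]
    {μ : Measure α} {l : Filter ι} [l.IsCountablyGenerated] {f h : α → ℝ} {g : ι → α → ℝ}
    {C : ℝ} (hf : Integrable f μ) (hg : ∀ᶠ i in l, AEStronglyMeasurable (g i) μ)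
    (hgC : ∀ᶠ i in l, ∀ᵐ a ∂μ, ‖g i a‖ ≤ C)
    (hgh : ∀ᵐ a ∂μ, Tendsto (fun i ↦ g i a) l (𝓝 (h a))) :
    Tendsto (fun i ↦ ∫ a, f a * g i a ∂μ) l (𝓝 (∫ a, f a * h a ∂μ)) := by
  refine tendsto_integral_filter_of_dominated_convergence (fun a ↦ ‖f a‖ * C)
    (hg.mono fun i hi ↦ hf.aestronglyMeasurable.mul hi) ?_ (hf.norm.mul_const C) ?_
  · filter_upwards [hgC] with i hi
    filter_upwards [hi] with a ha
    rw [norm_mul]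
    exact mul_le_mul_of_nonneg_left ha (norm_nonneg _)
  · filter_upwards [hgh] with a ha
    exact tendsto_const_nhds.mul ha

theorem tendsto_exp_neg_div_atTop (a : ℝ) : Tendsto (fun x : ℝ ↦ exp (-a / x)) atTop (𝓝 1) := by
  simpa using ((tendsto_const_nhds (x := -a)).div_atTop tendsto_id).rexp

lemma rpow_neg_half_mul_div_sq_mul_div_rpow {T y : ℝ} (hT : 0 < T) (hy : 0 < y) :
    T ^ (-(1:ℝ)/2) * (T / y ^ 2) * (T / y) ^ (-(1:ℝ)/2) = y ^ (-(1/2 + 1 : ℝ)) := by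
  have hT' : T ^ (-(1:ℝ)/2) * T ^ (-(1:ℝ)/2) * T = 1 := by
    rw [← rpow_add hT, ← rpow_add_one hT.ne']; norm_num
  have hy' : y ^ (-(1/2 + 1 : ℝ)) * (y ^ 2 * y ^ (-(1:ℝ)/2)) = 1 := by
    rw [← rpow_natCast, ← rpow_add hy, ← rpow_add hy]; norm_num
  calc T ^ (-(1:ℝ)/2) * (T / y ^ 2) * (T / y) ^ (-(1:ℝ)/2)
      = (T ^ (-(1:ℝ)/2) * T ^ (-(1:ℝ)/2) * T) / (y ^ 2 * y ^ (-(1:ℝ)/2)) := by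
        rw [div_rpow hT.le hy.le]; ring
    _ = y ^ (-(1/2 + 1 : ℝ)) := by
        rw [hT', eq_comm, eq_div_iff (by positivity), hy']

theorem rpow_neg_half_mul_integral_eq (c : ℝ) (H : ℝ → ℝ) {T : ℝ} (hT : 0 < T) :
    T ^ (-(1:ℝ)/2) *
        ∫ x in Ioi 0, (1 - exp (-T / x)) * H x * (c * x ^ (-(1:ℝ)/2) * exp (-1 / x)) =
      ∫ y in Ioi 0, c * ((1 - exp (-y)) * y ^ (-(1/2 + 1 : ℝ))) * (exp (-y / T) * H (T / y)) := by
  rw [← integral_Ioi_comp_div _ hT, ← integral_const_mul]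
  refine setIntegral_congr_fun measurableSet_Ioi fun y (hy : 0 < y) ↦ ?_
  have hexp : -T / (T / y) = -y := by field_simp
  have hexp' : -1 / (T / y) = -y / T := by field_simp
  rw [smul_eq_mul, hexp, hexp', ← rpow_neg_half_mul_div_sq_mul_div_rpow hT hy]
  ring

section

variable {γ m Y p : ℝ}

lemma norm_exp_neg_div_mul_rpow_le (hγ : 0 < γ) (hm : 0 ≤ m) (hY : 0 ≤ Y) (hp : p ≤ 0)
    {T y : ℝ} (hT : 0 < T) (hy : 0 < y) :
    ‖exp (-y / T) * (γ + m * (1 - exp (-Y / (T / y)))) ^ p‖ ≤ γ ^ p := by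
  have hexp : ‖exp (-y / T)‖ ≤ 1 := by
    rw [norm_of_nonneg (exp_pos _).le, exp_le_one_iff, neg_div]
    exact neg_nonpos.mpr (by positivity)
  have hle : γ ≤ γ + m * (1 - exp (-Y / (T / y))) := by
    rw [neg_div]
    exact le_add_of_nonneg_right (mul_nonneg hm (one_sub_exp_neg_nonneg (by positivity)))
  have hpow : ‖(γ + m * (1 - exp (-Y / (T / y)))) ^ p‖ ≤ γ ^ p := by
    rw [norm_of_nonneg (rpow_nonneg (hγ.le.trans hle) p)]
    exact rpow_le_rpow_of_nonpos hγ hle hp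
  rw [norm_mul, ← one_mul (γ ^ p)]
  exact mul_le_mul hexp hpow (norm_nonneg _) zero_le_one

lemma tendsto_exp_neg_div_mul_rpow (hγ : 0 < γ) {y : ℝ} (hy : 0 < y) :
    Tendsto (fun T ↦ exp (-y / T) * (γ + m * (1 - exp (-Y / (T / y)))) ^ p) atTop
      (𝓝 (γ ^ p)) := by
  have hpow : Tendsto (fun x ↦ (γ + m * (1 - exp (-Y / x))) ^ p) atTop (𝓝 (γ ^ p)) := by
    simpa using (((tendsto_exp_neg_div_atTop Y).const_sub 1).const_mul m |>.const_add γ).rpow_const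
      (Or.inl (by simpa using hγ.ne'))
  simpa using (tendsto_exp_neg_div_atTop y).mul (hpow.comp (tendsto_id.atTop_div_const hy))

end

theorem stmt14_general (n : ℕ) (Y γ σ : ℝ) (hY : 0 < Y) (hγ : 0 < γ)
    (hσ1 : σ < 1) :
    Tendsto (fun T : ℝ => T ^ (-(1:ℝ)/2) *
      ∫ x in Set.Ioi (0:ℝ), (1 - Real.exp (-T / x)) *
        (γ + n * (1 - Real.exp (-Y / x))) ^ (-(1 - σ)) *
        ((2 * Real.sqrt Real.pi)⁻¹ * x ^ (-(1:ℝ)/2) * Real.exp (-1 / x)))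
      atTop (nhds (γ ^ (-(1 - σ)))) := by
  set p := -(1 - σ)
  set H : ℝ → ℝ := fun x ↦ (γ + n * (1 - exp (-Y / x))) ^ p
  set f : ℝ → ℝ := fun y ↦ (2 * √π)⁻¹ * ((1 - exp (-y)) * y ^ (-(1/2 + 1 : ℝ)))
  have hf : IntegrableOn f (Ioi 0) :=
    (integrableOn_one_sub_exp_neg_mul_rpow (by norm_num) (by norm_num)).const_mul _
  have hf_int : ∫ y in Ioi 0, f y = 1 := by
    rw [integral_const_mul, integral_one_sub_exp_neg_mul_rpow (by norm_num) (by norm_num)]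
    norm_num [Gamma_one_half_eq]
    field_simp
  have hlim : Tendsto (fun T ↦ ∫ y in Ioi 0, f y * (exp (-y / T) * H (T / y))) atTop
      (𝓝 (∫ y in Ioi 0, f y * γ ^ p)) := by
    refine tendsto_integral_mul_of_tendsto_of_norm_le (C := γ ^ p) hf
      (Eventually.of_forall fun T ↦ (by fun_prop : Measurable _).aestronglyMeasurable) ?_ ?_
    · filter_upwards [eventually_gt_atTop 0] with T hT
      filter_upwards [ae_restrict_mem measurableSet_Ioi] with y (hy : 0 < y)
      exact norm_exp_neg_div_mul_rpow_le hγ n.cast_nonneg hY.le (by linarith) hT hy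
    · filter_upwards [ae_restrict_mem measurableSet_Ioi] with y (hy : 0 < y)
      exact tendsto_exp_neg_div_mul_rpow hγ hy
  rw [integral_mul_const, hf_int, one_mul] at hlim
  refine hlim.congr' ?_
  filter_upwards [eventually_gt_atTop 0] with T hT
  exact (rpow_neg_half_mul_integral_eq _ H hT).symm

/-- For the exponential-kernel generalized gamma model, the posterior-tilted
first moment satisfies
`T^{-1/2} ∫₀^∞ (1-e^{-T/x})[γ+n(1-e^{-Y/x})]^{-(1-σ)} (2√π)⁻¹ x^{-1/2} e^{-1/x} dx
 → γ^{-(1-σ)}` as `T → ∞`. -/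
theorem stmt14 (n : ℕ) (Y γ σ : ℝ) (hY : 0 < Y) (hγ : 0 < γ)
    (hσ0 : 0 ≤ σ) (hσ1 : σ < 1) :
    Tendsto (fun T : ℝ => T ^ (-(1:ℝ)/2) *
      ∫ x in Set.Ioi (0:ℝ), (1 - Real.exp (-T / x)) *
        (γ + n * (1 - Real.exp (-Y / x))) ^ (-(1 - σ)) *
        ((2 * Real.sqrt Real.pi)⁻¹ * x ^ (-(1:ℝ)/2) * Real.exp (-1 / x)))
      atTop (nhds (γ ^ (-(1 - σ)))) :=
  stmt14_general n Y γ σ hY hγ hσ1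
end

section
/- For the exponential kernel k(t,x) = x^{-1}e^{-t/x}, the quadratic kernel k_T^{(1)}(v,x;u,y) = (uv/T)∫₀^T k(s,x)k(s,y)ds equals (uv/T)·(1/(x+y))·(1 - exp{-(x+y)T/(xy)}); and with the homogeneous intensity ν(dv,dx) = ρ(dv)λ(dx), λ(dx) = (2√π)^{-1}x^{-1/2}e^{-1/x}dx, its squared L²(ν²) norm is ‖k_T^{(1)}‖²_{L²(ν²)} = (K_ρ^{(2)})² / (16(2T² + 3T + 1)). -/
open MeasureTheory Filter Set Real Topology



section Aux

/-! ### Inverse substitution on `Ioi 0` -/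

lemma inv_image_Ioi : (fun p : ℝ => p⁻¹) '' (Ioi 0) = Ioi 0 := by
  ext x
  constructor
  · rintro ⟨p, hp, rfl⟩; exact mem_Ioi.mpr (inv_pos.mpr (mem_Ioi.mp hp))
  · intro hx; exact ⟨x⁻¹, mem_Ioi.mpr (inv_pos.mpr (mem_Ioi.mp hx)), inv_inv x⟩

lemma inv_deriv_Ioi : ∀ p ∈ Ioi (0:ℝ), HasDerivWithinAt (fun x : ℝ => x⁻¹) (-((p:ℝ)^2)⁻¹) (Ioi 0) p :=
  fun p hp => (hasDerivAt_inv (ne_of_gt hp)).hasDerivWithinAt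

lemma inv_injOn : Set.InjOn (fun p : ℝ => p⁻¹) (Ioi 0) :=
  fun _ _ _ _ h => inv_injective h

lemma integral_inv_sub (g : ℝ → ℝ) :
    ∫ x in Ioi (0:ℝ), g x = ∫ p in Ioi (0:ℝ), (p^2)⁻¹ * g p⁻¹ := by
  have h := integral_image_eq_integral_abs_deriv_smul measurableSet_Ioi inv_deriv_Ioi inv_injOn g
  rw [inv_image_Ioi] at h
  rw [h]
  refine setIntegral_congr_fun measurableSet_Ioi (fun p _ => ?_)
  simp only [smul_eq_mul, abs_neg, abs_inv]
  rw [abs_of_nonneg (sq_nonneg p)]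

lemma integrableOn_inv_sub (g : ℝ → ℝ) :
    IntegrableOn g (Ioi (0:ℝ)) ↔ IntegrableOn (fun p => (p^2)⁻¹ * g p⁻¹) (Ioi (0:ℝ)) := by
  have h := integrableOn_image_iff_integrableOn_abs_deriv_smul measurableSet_Ioi inv_deriv_Ioi inv_injOn g
  rw [inv_image_Ioi] at h
  rw [h]
  refine integrableOn_congr_fun (fun p _ => ?_) measurableSet_Ioi
  simp only [smul_eq_mul, abs_neg, abs_inv]
  rw [abs_of_nonneg (sq_nonneg p)]

/-! ### Elementary integrals -/

lemma L_exp {c : ℝ} (hc : 0 < c) : ∫ p in Ioi (0:ℝ), Real.exp (-(c*p)) = c⁻¹ := by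
  have h := integral_comp_mul_left_Ioi (fun u => Real.exp (-u)) 0 hc
  simp only [mul_zero, integral_exp_neg_Ioi, neg_zero, Real.exp_zero, smul_eq_mul, mul_one] at h
  simpa using h

lemma sqrt_le_one_add {q : ℝ} (hq : 0 ≤ q) : Real.sqrt q ≤ 1 + q := by
  nlinarith [Real.sq_sqrt hq, Real.sqrt_nonneg q, sq_nonneg (Real.sqrt q - 1)]

lemma le_exp_half {a q : ℝ} (ha : 0 < a) (hq : 0 ≤ q) : q ≤ 2/a * Real.exp (a/2*q) := by
  have h := Real.add_one_le_exp (a/2*q)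
  have h2 : a/2*q ≤ Real.exp (a/2*q) := by linarith
  rw [← sub_nonneg]
  have : 2/a * Real.exp (a/2*q) - q = 2/a * (Real.exp (a/2*q) - a/2*q) := by field_simp
  rw [this]
  exact mul_nonneg (by positivity) (by linarith)

lemma L_majorant {a : ℝ} (ha : 0 < a) :
    IntegrableOn (fun q => Real.sqrt q * Real.exp (-(a*q))) (Ioi (0:ℝ)) := by
  have hmeas : AEStronglyMeasurable (fun q : ℝ => Real.sqrt q * Real.exp (-(a*q))) (volume.restrict (Ioi 0)) :=
    ((Real.continuous_sqrt.mul (Real.continuous_exp.comp (continuous_const.mul continuous_id).neg)).aestronglyMeasurable)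
  have h1 : IntegrableOn (fun q : ℝ => Real.exp (-a*q) + 2/a * Real.exp (-(a/2)*q)) (Ioi 0) :=
    (exp_neg_integrableOn_Ioi 0 ha).add ((exp_neg_integrableOn_Ioi 0 (half_pos ha)).const_mul _)
  refine Integrable.mono' h1 hmeas ?_
  filter_upwards [ae_restrict_mem measurableSet_Ioi] with q hq
  have hq0 : (0:ℝ) ≤ q := le_of_lt hq
  rw [Real.norm_eq_abs, abs_of_nonneg (mul_nonneg (Real.sqrt_nonneg q) (Real.exp_pos _).le)]
  have h2 : Real.sqrt q ≤ 1 + q := sqrt_le_one_add hq0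
  have h3 : q * Real.exp (-(a*q)) ≤ 2/a * Real.exp (-(a/2)*q) := by
    have h4 : q ≤ 2/a * Real.exp (a/2*q) := le_exp_half ha hq0
    calc q * Real.exp (-(a*q)) ≤ (2/a * Real.exp (a/2*q)) * Real.exp (-(a*q)) := by
          exact mul_le_mul_of_nonneg_right h4 (Real.exp_pos _).le
      _ = 2/a * Real.exp (-(a/2)*q) := by rw [mul_assoc, ← Real.exp_add]; ring_nf
  calc Real.sqrt q * Real.exp (-(a*q)) ≤ (1+q) * Real.exp (-(a*q)) :=
        mul_le_mul_of_nonneg_right h2 (Real.exp_pos _).le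
    _ = Real.exp (-(a*q)) + q * Real.exp (-(a*q)) := by ring
    _ ≤ Real.exp (-a*q) + 2/a * Real.exp (-(a/2)*q) := by rw [neg_mul]; linarith

/-! ### The arctan-type integral -/

noncomputable def Fa (u : ℝ) : ℝ := -u / (2*(1+u^2)^2) + u / (4*(1+u^2)) + Real.arctan u / 4

lemma Fa_deriv (u : ℝ) : HasDerivAt Fa (2*u^2/(1+u^2)^3) u := by
  have h1 : HasDerivAt (fun u:ℝ => 1+u^2) (2*u) u := by
    simpa using (hasDerivAt_pow 2 u).const_add 1
  have h2 : HasDerivAt (fun u:ℝ => 2*(1+u^2)^2) (2*((2:ℕ)*(1+u^2)^1*(2*u))) u :=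
    (h1.pow 2).const_mul 2
  have hF1 : HasDerivAt (fun u:ℝ => -u / (2*(1+u^2)^2))
      (((-1)*(2*(1+u^2)^2) - (-u)*(2*((2:ℕ)*(1+u^2)^1*(2*u)))) / (2*(1+u^2)^2)^2) u :=
    ((hasDerivAt_id u).neg).div h2 (by positivity)
  have h3 : HasDerivAt (fun u:ℝ => 4*(1+u^2)) (4*(2*u)) u := h1.const_mul 4
  have hF2 : HasDerivAt (fun u:ℝ => u / (4*(1+u^2)))
      ((1*(4*(1+u^2)) - u*(4*(2*u))) / (4*(1+u^2))^2) u :=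
    (hasDerivAt_id u).div h3 (by positivity)
  have hF3 : HasDerivAt (fun u:ℝ => Real.arctan u / 4) (1/(1+u^2)/4) u :=
    (Real.hasDerivAt_arctan u).div_const 4
  have := (hF1.fun_add hF2).fun_add hF3
  refine this.congr_deriv ?_
  field_simp
  ring

lemma Fa_tendsto : Tendsto Fa atTop (𝓝 (π/8)) := by
  have hA : Tendsto (fun u:ℝ => 1+u^2) atTop atTop :=
    tendsto_atTop_add_const_left _ 1 (tendsto_pow_atTop two_ne_zero)
  have hB : Tendsto (fun u:ℝ => (1+u^2)⁻¹) atTop (𝓝 0) := hA.inv_tendsto_atTop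
  have hC : Tendsto (fun u:ℝ => u/(1+u^2)) atTop (𝓝 0) := by
    apply tendsto_of_tendsto_of_tendsto_of_le_of_le' tendsto_const_nhds tendsto_inv_atTop_zero
    · filter_upwards [eventually_gt_atTop (0:ℝ)] with u hu
      positivity
    · filter_upwards [eventually_gt_atTop (0:ℝ)] with u hu
      rw [div_le_iff₀ (by positivity)]
      rw [inv_mul_eq_div, le_div_iff₀ hu]
      nlinarith
  have hD : Tendsto (fun u:ℝ => u/(1+u^2)^2) atTop (𝓝 0) := by
    have := hC.mul hB
    simp only [zero_mul] at this
    convert this using 2 with u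
    simp only [div_eq_mul_inv, mul_inv, sq]
    ring
  have hE : Tendsto (fun u:ℝ => Real.arctan u) atTop (𝓝 (π/2)) :=
    tendsto_nhds_of_tendsto_nhdsWithin Real.tendsto_arctan_atTop
  have := ((hD.const_mul (-(1:ℝ)/2)).add (hC.const_mul (1/4))).add (hE.div_const 4)
  simp only [mul_zero, add_zero, zero_add] at this
  convert this using 2 with u
  · unfold Fa
    simp only [div_eq_mul_inv, mul_inv, sq]
    ring
  · ring

lemma ratint_integrable : IntegrableOn (fun x : ℝ => 2*x^2/(1+x^2)^3) (Ioi 0) := by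
  have hcont : Continuous (fun x : ℝ => 2*x^2/(1+x^2)^3) :=
    Continuous.div (by continuity) (by continuity) (fun x => by positivity)
  refine Integrable.mono' ((integrable_inv_one_add_sq.const_mul 2).integrableOn) hcont.aestronglyMeasurable ?_
  filter_upwards with x
  rw [Real.norm_eq_abs, abs_of_nonneg (by positivity)]
  have h1 : (2:ℝ)*(1+x^2)⁻¹ = 2/(1+x^2) := by ring
  rw [h1, div_le_div_iff₀ (by positivity) (by positivity)]
  nlinarith [sq_nonneg x, sq_nonneg (x^2), sq_nonneg (1+x^2)]

lemma L_ratint : ∫ x in Ioi (0:ℝ), 2*x^2/(1+x^2)^3 = π/8 := by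
  have h := integral_Ioi_of_hasDerivAt_of_tendsto (a := 0) (f := Fa)
    (f' := fun x => 2*x^2/(1+x^2)^3) ((Fa_deriv 0).continuousAt.continuousWithinAt)
    (fun x _ => Fa_deriv x) ratint_integrable Fa_tendsto
  rw [h]
  unfold Fa
  norm_num

lemma beta_integrand_eq {x : ℝ} (hx : x ∈ Ioi (0:ℝ)) :
    (2 * x ^ ((2:ℝ)-1)) • (Real.sqrt (x^(2:ℝ)) / (1+x^(2:ℝ))^3) = 2*x^2/(1+x^2)^3 := by
  have hx0 : (0:ℝ) < x := hx
  have h2 : x^((2:ℝ)) = x^2 := by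
    rw [show ((2:ℝ)) = ((2:ℕ):ℝ) by norm_num, Real.rpow_natCast]
  have h1 : x^((2:ℝ)-1) = x := by norm_num
  rw [h1, h2, Real.sqrt_sq hx0.le, smul_eq_mul]
  ring

lemma L_beta : ∫ t in Ioi (0:ℝ), Real.sqrt t / (1+t)^3 = π/8 := by
  rw [← integral_comp_rpow_Ioi_of_pos (g := fun t => Real.sqrt t / (1+t)^3) (p := 2) (by norm_num)]
  rw [← L_ratint]
  exact setIntegral_congr_fun measurableSet_Ioi (fun x hx => beta_integrand_eq hx)

lemma beta_integrable : IntegrableOn (fun t : ℝ => Real.sqrt t / (1+t)^3) (Ioi 0) := by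
  rw [← integrableOn_Ioi_comp_rpow_iff' (f := fun t => Real.sqrt t / (1+t)^3) (p := 2) (by norm_num)]
  have h0 : IntegrableOn (fun x : ℝ => x^2/(1+x^2)^3) (Ioi 0) := by
    have h := ratint_integrable.div_const 2
    refine IntegrableOn.congr_fun h (fun x _ => ?_) measurableSet_Ioi
    ring
  refine IntegrableOn.congr_fun h0 (fun x hx => ?_) measurableSet_Ioi
  have hx0 : (0:ℝ) < x := hx
  have h2 : x^((2:ℝ)) = x^2 := by
    rw [show ((2:ℝ)) = ((2:ℕ):ℝ) by norm_num, Real.rpow_natCast]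
  have h1 : x^((2:ℝ)-1) = x := by norm_num
  rw [h1, h2, Real.sqrt_sq hx0.le, smul_eq_mul]
  ring

/-! ### The kernels -/

noncomputable def fp (a p q : ℝ) : ℝ :=
  Real.sqrt p * Real.sqrt q * ((p+q)^2)⁻¹ * Real.exp (-(a*(p+q)))

noncomputable def g2 (a p t : ℝ) : ℝ :=
  Real.sqrt t * ((1+t)^2)⁻¹ * Real.exp (-(a*p*(1+t)))

noncomputable def ψf (a x y : ℝ) : ℝ :=
  (x ^ (-(1:ℝ)/2) * Real.exp (-(a/x))) * (y ^ (-(1:ℝ)/2) * Real.exp (-(a/y))) * ((x+y)^2)⁻¹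

lemma g2_nonneg (a p t : ℝ) (ht : 0 ≤ t) : 0 ≤ g2 a p t := by
  unfold g2; positivity

lemma fp_scale {a p t : ℝ} (hp : 0 < p) : fp a p (p*t) = p⁻¹ * g2 a p t := by
  unfold fp g2
  have e1 : Real.sqrt (p*t) = Real.sqrt p * Real.sqrt t := Real.sqrt_mul hp.le t
  have e2 : ((p + p*t)^2)⁻¹ = (p^2)⁻¹ * ((1+t)^2)⁻¹ := by
    rw [show p + p*t = p*(1+t) by ring, mul_pow, mul_inv]
  have e3 : -(a*(p+p*t)) = -(a*p*(1+t)) := by ring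
  rw [e1, e2, e3]
  have e4 : Real.sqrt p * Real.sqrt p = p := Real.mul_self_sqrt hp.le
  have hpne : p ≠ 0 := hp.ne'
  have e5 : Real.sqrt p * (Real.sqrt p * Real.sqrt t) * ((p^2)⁻¹ * ((1+t)^2)⁻¹) * Real.exp (-(a*p*(1+t)))
      = (Real.sqrt p * Real.sqrt p) * (p⁻¹ * (p⁻¹ * (Real.sqrt t * ((1+t)^2)⁻¹ * Real.exp (-(a*p*(1+t)))))) := by
    rw [sq, mul_inv]; ring
  rw [e5, e4, ← mul_assoc p, mul_inv_cancel₀ hpne, one_mul]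

lemma fp_inner {a p : ℝ} (hp : 0 < p) :
    ∫ q in Ioi (0:ℝ), fp a p q = ∫ t in Ioi (0:ℝ), g2 a p t := by
  have h := integral_comp_mul_left_Ioi (fun q => fp a p q) 0 hp
  simp only [mul_zero, smul_eq_mul] at h
  have h2 : ∫ t in Ioi (0:ℝ), fp a p (p*t) = ∫ t in Ioi (0:ℝ), p⁻¹ * g2 a p t :=
    setIntegral_congr_fun measurableSet_Ioi (fun t _ => fp_scale hp)
  rw [h2, MeasureTheory.integral_const_mul] at h
  have := congrArg (fun z => p * z) h
  simp only [← mul_assoc, mul_inv_cancel₀ hp.ne', one_mul] at this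
  exact this.symm

lemma g2_inner_p {a t : ℝ} (ha : 0 < a) (ht : 0 < t) :
    ∫ p in Ioi (0:ℝ), g2 a p t = a⁻¹ * (Real.sqrt t / (1+t)^3) := by
  have h1 : ∀ p ∈ Ioi (0:ℝ), g2 a p t
      = (Real.sqrt t * ((1+t)^2)⁻¹) * Real.exp (-((a*(1+t))*p)) := by
    intro p _
    unfold g2
    have e : -(a*p*(1+t)) = -((a*(1+t))*p) := by ring
    rw [e, mul_assoc]
  rw [setIntegral_congr_fun measurableSet_Ioi h1, MeasureTheory.integral_const_mul,
    L_exp (by positivity : (0:ℝ) < a*(1+t))]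
  have h1t : (0:ℝ) < 1 + t := by linarith
  simp only [div_eq_mul_inv, mul_inv, show ((1:ℝ)+t)^3 = ((1+t)^2)*(1+t) from by ring]
  ring

lemma g2_prod_integrable {a : ℝ} (ha : 0 < a) :
    Integrable (Function.uncurry (g2 a))
      ((volume.restrict (Ioi (0:ℝ))).prod (volume.restrict (Ioi (0:ℝ)))) := by
  have hmeas : AEStronglyMeasurable (Function.uncurry (g2 a))
      ((volume.restrict (Ioi (0:ℝ))).prod (volume.restrict (Ioi (0:ℝ)))) := by
    apply Measurable.aestronglyMeasurable
    unfold Function.uncurry g2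
    apply Measurable.mul
    apply Measurable.mul
    · exact (Real.continuous_sqrt.measurable).comp measurable_snd
    · exact (((measurable_const.add measurable_snd).pow_const 2).inv)
    · exact Real.measurable_exp.comp ((measurable_const.mul measurable_fst).mul (measurable_const.add measurable_snd)).neg
  rw [integrable_prod_iff' hmeas]
  constructor
  · filter_upwards [ae_restrict_mem measurableSet_Ioi] with t ht
    have h1t : (0:ℝ) < 1+t := by simp only [mem_Ioi] at ht; linarith
    have hInt : IntegrableOn (fun p => (Real.sqrt t * ((1+t)^2)⁻¹) * Real.exp (-(a*(1+t))*p)) (Ioi (0:ℝ)) :=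
      (exp_neg_integrableOn_Ioi 0 (by positivity)).const_mul _
    refine IntegrableOn.congr_fun hInt (fun p _ => ?_) measurableSet_Ioi
    simp only [Function.uncurry_apply_pair]
    unfold g2
    have e : -(a*(1+t))*p = -(a*p*(1+t)) := by ring
    rw [e]
  · have hInt : IntegrableOn (fun t : ℝ => a⁻¹ * (Real.sqrt t / (1+t)^3)) (Ioi 0) :=
      beta_integrable.const_mul _
    refine IntegrableOn.congr_fun hInt (fun t ht => ?_) measurableSet_Ioi
    have ht0 : (0:ℝ) < t := ht
    rw [← g2_inner_p ha ht0]
    refine (setIntegral_congr_fun measurableSet_Ioi (fun p _ => ?_)).symm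
    simp only [Function.uncurry_apply_pair, Real.norm_eq_abs]
    rw [abs_of_nonneg (g2_nonneg a p t ht0.le)]

lemma g2_double {a : ℝ} (ha : 0 < a) :
    ∫ p in Ioi (0:ℝ), ∫ t in Ioi (0:ℝ), g2 a p t = π/8 * a⁻¹ := by
  rw [integral_integral_swap (g2_prod_integrable ha)]
  have h1 : ∀ t ∈ Ioi (0:ℝ), ∫ p in Ioi (0:ℝ), g2 a p t = a⁻¹ * (Real.sqrt t / (1+t)^3) :=
    fun t ht => g2_inner_p ha ht
  rw [setIntegral_congr_fun measurableSet_Ioi h1, MeasureTheory.integral_const_mul, L_beta]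
  ring

/-! ### Back to x-space -/

lemma inv_rpow_half {q : ℝ} (hq : 0 < q) : (q⁻¹) ^ (-(1:ℝ)/2) = Real.sqrt q := by
  rw [show (-(1:ℝ)/2) = -(1/2 : ℝ) by norm_num, Real.inv_rpow hq.le, Real.rpow_neg hq.le,
    inv_inv, ← Real.sqrt_eq_rpow]

lemma mixed_eq {a x q : ℝ} (hx : 0 < x) (hq : 0 < q) :
    (q^2)⁻¹ * ψf a x q⁻¹
      = (x ^ (-(1:ℝ)/2) * Real.exp (-(a/x))) * (((x*q+1)^2)⁻¹ * (Real.sqrt q * Real.exp (-(a*q)))) := by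
  unfold ψf
  have e1 : (q⁻¹) ^ (-(1:ℝ)/2) = Real.sqrt q := inv_rpow_half hq
  have e2 : a / q⁻¹ = a * q := by field_simp
  have e3 : (q^2)⁻¹ * ((x+q⁻¹)^2)⁻¹ = ((x*q+1)^2)⁻¹ := by
    rw [← mul_inv, ← mul_pow]
    congr 2
    field_simp
  rw [e1, e2]
  calc (q^2)⁻¹ * ((x ^ (-(1:ℝ)/2) * Real.exp (-(a/x))) * (Real.sqrt q * Real.exp (-(a*q))) * ((x+q⁻¹)^2)⁻¹)
      = (x ^ (-(1:ℝ)/2) * Real.exp (-(a/x))) * (((q^2)⁻¹ * ((x+q⁻¹)^2)⁻¹) * (Real.sqrt q * Real.exp (-(a*q)))) := by ring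
    _ = _ := by rw [e3]

lemma psi_fp_eq {a p q : ℝ} (hp : 0 < p) (hq : 0 < q) :
    (p^2)⁻¹ * ((q^2)⁻¹ * ψf a p⁻¹ q⁻¹) = fp a p q := by
  unfold ψf fp
  have e1 : (q⁻¹) ^ (-(1:ℝ)/2) = Real.sqrt q := inv_rpow_half hq
  have e1' : (p⁻¹) ^ (-(1:ℝ)/2) = Real.sqrt p := inv_rpow_half hp
  have e2 : a / q⁻¹ = a * q := by field_simp
  have e2' : a / p⁻¹ = a * p := by field_simp
  have e3 : (p^2)⁻¹ * ((q^2)⁻¹ * ((p⁻¹+q⁻¹)^2)⁻¹) = ((p+q)^2)⁻¹ := by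
    rw [← mul_inv, ← mul_inv, ← mul_pow, ← mul_pow]
    congr 2
    field_simp
    try ring
  have e4 : Real.exp (-(a*p)) * Real.exp (-(a*q)) = Real.exp (-(a*(p+q))) := by
    rw [← Real.exp_add]; congr 1; ring
  rw [e1, e1', e2, e2']
  calc (p^2)⁻¹ * ((q^2)⁻¹ * ((Real.sqrt p * Real.exp (-(a*p))) * (Real.sqrt q * Real.exp (-(a*q))) * ((p⁻¹+q⁻¹)^2)⁻¹))
      = (Real.sqrt p * Real.sqrt q) * ((p^2)⁻¹ * ((q^2)⁻¹ * ((p⁻¹+q⁻¹)^2)⁻¹)) * (Real.exp (-(a*p)) * Real.exp (-(a*q))) := by ring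
    _ = Real.sqrt p * Real.sqrt q * ((p+q)^2)⁻¹ * Real.exp (-(a*(p+q))) := by rw [e3, e4]

lemma inner_chain {a p : ℝ} (hp : 0 < p) :
    (p^2)⁻¹ * ∫ y in Ioi (0:ℝ), ψf a p⁻¹ y = ∫ t in Ioi (0:ℝ), g2 a p t := by
  rw [integral_inv_sub (fun y => ψf a p⁻¹ y), ← MeasureTheory.integral_const_mul]
  rw [setIntegral_congr_fun measurableSet_Ioi (fun q hq => psi_fp_eq hp (mem_Ioi.mp hq))]
  exact fp_inner hp

lemma Phi {a : ℝ} (ha : 0 < a) :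
    ∫ x in Ioi (0:ℝ), ∫ y in Ioi (0:ℝ), ψf a x y = π/8 * a⁻¹ := by
  rw [integral_inv_sub (fun x => ∫ y in Ioi (0:ℝ), ψf a x y)]
  rw [setIntegral_congr_fun measurableSet_Ioi (fun p hp => inner_chain (mem_Ioi.mp hp))]
  exact g2_double ha

lemma psi_intY {a x : ℝ} (ha : 0 < a) (hx : 0 < x) :
    IntegrableOn (fun y => ψf a x y) (Ioi (0:ℝ)) := by
  rw [integrableOn_inv_sub (fun y => ψf a x y)]
  have hmeas : AEStronglyMeasurable (fun q : ℝ =>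
      (x ^ (-(1:ℝ)/2) * Real.exp (-(a/x))) * (((x*q+1)^2)⁻¹ * (Real.sqrt q * Real.exp (-(a*q)))))
      (volume.restrict (Ioi 0)) := by
    apply Measurable.aestronglyMeasurable
    apply Measurable.mul measurable_const
    apply Measurable.mul
    · exact (((measurable_const.mul measurable_id).add measurable_const).pow_const 2).inv
    · exact (Real.continuous_sqrt.measurable).mul
        (Real.measurable_exp.comp (measurable_const.mul measurable_id).neg)
  have hInt : IntegrableOn (fun q : ℝ =>
      (x ^ (-(1:ℝ)/2) * Real.exp (-(a/x))) * (Real.sqrt q * Real.exp (-(a*q)))) (Ioi 0) :=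
    (L_majorant ha).const_mul _
  have hNice : IntegrableOn (fun q : ℝ =>
      (x ^ (-(1:ℝ)/2) * Real.exp (-(a/x))) * (((x*q+1)^2)⁻¹ * (Real.sqrt q * Real.exp (-(a*q))))) (Ioi 0) := by
    refine Integrable.mono' hInt hmeas ?_
    filter_upwards [ae_restrict_mem measurableSet_Ioi] with q hq
    have hq0 : (0:ℝ) < q := hq
    have hb1 : ((x*q+1)^2)⁻¹ ≤ 1 := by
      rw [inv_le_one_iff₀]
      right
      nlinarith [mul_nonneg hx.le hq0.le]
    have hnn : (0:ℝ) ≤ x ^ (-(1:ℝ)/2) * Real.exp (-(a/x)) := by positivity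
    have hnn2 : (0:ℝ) ≤ Real.sqrt q * Real.exp (-(a*q)) := by positivity
    rw [Real.norm_eq_abs, abs_of_nonneg (by positivity)]
    calc (x ^ (-(1:ℝ)/2) * Real.exp (-(a/x))) * (((x*q+1)^2)⁻¹ * (Real.sqrt q * Real.exp (-(a*q))))
        ≤ (x ^ (-(1:ℝ)/2) * Real.exp (-(a/x))) * (1 * (Real.sqrt q * Real.exp (-(a*q)))) := by
          apply mul_le_mul_of_nonneg_left _ hnn
          exact mul_le_mul_of_nonneg_right hb1 hnn2
      _ = (x ^ (-(1:ℝ)/2) * Real.exp (-(a/x))) * (Real.sqrt q * Real.exp (-(a*q))) := by ring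
  refine IntegrableOn.congr_fun hNice (fun q hq => ?_) measurableSet_Ioi
  exact (mixed_eq hx (mem_Ioi.mp hq)).symm

lemma psi_intX {a : ℝ} (ha : 0 < a) :
    IntegrableOn (fun x => ∫ y in Ioi (0:ℝ), ψf a x y) (Ioi (0:ℝ)) := by
  rw [integrableOn_inv_sub (fun x => ∫ y in Ioi (0:ℝ), ψf a x y)]
  have h0 : IntegrableOn (fun p : ℝ => ∫ t in Ioi (0:ℝ), ‖g2 a p t‖) (Ioi (0:ℝ)) :=
    (g2_prod_integrable ha).integral_norm_prod_left
  have h1 : IntegrableOn (fun p : ℝ => ∫ t in Ioi (0:ℝ), g2 a p t) (Ioi (0:ℝ)) := by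
    refine IntegrableOn.congr_fun h0 (fun p _ => ?_) measurableSet_Ioi
    refine setIntegral_congr_fun measurableSet_Ioi (fun t ht => ?_)
    rw [Real.norm_eq_abs, abs_of_nonneg (g2_nonneg a p t (le_of_lt ht))]
  refine IntegrableOn.congr_fun h1 (fun p hp => ?_) measurableSet_Ioi
  exact (inner_chain (mem_Ioi.mp hp)).symm

end Aux

lemma split_point {T x y : ℝ} (hT : 0 < T) (hx : 0 < x) (hy : 0 < y) :
    ((1/T) * (x+y)⁻¹ * (1 - Real.exp (-(T*(x+y)/(x*y)))))^2 *
      ((2*Real.sqrt π)⁻¹ * x ^ (-(1:ℝ)/2) * Real.exp (-1/x)) *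
      ((2*Real.sqrt π)⁻¹ * y ^ (-(1:ℝ)/2) * Real.exp (-1/y))
    = (4*π*T^2)⁻¹ * (ψf 1 x y - 2 * ψf (1+T) x y + ψf (1+2*T) x y) := by
  unfold ψf
  have hxne : x ≠ 0 := hx.ne'
  have hyne : y ≠ 0 := hy.ne'
  have hxyne : x + y ≠ 0 := by positivity
  have hE : Real.exp (-(T*(x+y)/(x*y))) = Real.exp (-(T/x)) * Real.exp (-(T/y)) := by
    rw [← Real.exp_add]; congr 1; field_simp; ring
  have hax : Real.exp (-((1+T)/x)) = Real.exp (-(1/x)) * Real.exp (-(T/x)) := by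
    rw [← Real.exp_add]; congr 1; ring
  have hay : Real.exp (-((1+T)/y)) = Real.exp (-(1/y)) * Real.exp (-(T/y)) := by
    rw [← Real.exp_add]; congr 1; ring
  have hbx : Real.exp (-((1+2*T)/x)) = Real.exp (-(1/x)) * (Real.exp (-(T/x)) * Real.exp (-(T/x))) := by
    rw [← Real.exp_add, ← Real.exp_add]; congr 1; ring
  have hby : Real.exp (-((1+2*T)/y)) = Real.exp (-(1/y)) * (Real.exp (-(T/y)) * Real.exp (-(T/y))) := by
    rw [← Real.exp_add, ← Real.exp_add]; congr 1; ring
  have hnx : (-1)/x = -(1/x) := by ring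
  have hny : (-1)/y = -(1/y) := by ring
  set s := Real.sqrt π with hs
  have hss : s * s = π := Real.mul_self_sqrt Real.pi_pos.le
  have hsne : s ≠ 0 := by
    rw [hs]; exact (Real.sqrt_pos.mpr Real.pi_pos).ne'
  have hpi : (4*π*T^2)⁻¹ = ((2*s)*(2*s)*T^2)⁻¹ := by rw [← hss]; ring_nf
  have hinv2 : ((x+y)^2)⁻¹ = (x+y)⁻¹ * (x+y)⁻¹ := by rw [sq, mul_inv]
  rw [hE, hax, hay, hbx, hby, hnx, hny, hpi, hinv2]
  field_simp
  ring


lemma part1 {T v u x y : ℝ} (hx : 0 < x) (hy : 0 < y) (hT : 0 < T) :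
    (u * v / T) * ∫ s in (0:ℝ)..T,
        (x⁻¹ * Real.exp (-s / x)) * (y⁻¹ * Real.exp (-s / y)) =
    (u * v / T) * (x + y)⁻¹ * (1 - Real.exp (-(T * (x + y) / (x * y)))) := by
  have hxne : x ≠ 0 := hx.ne'
  have hyne : y ≠ 0 := hy.ne'
  set c : ℝ := 1/x + 1/y with hc
  have hcpos : 0 < c := by rw [hc]; positivity
  have hder : ∀ s : ℝ, HasDerivAt (fun s : ℝ => -(c⁻¹ * x⁻¹ * y⁻¹) * Real.exp (-(c*s)))
      ((x⁻¹ * Real.exp (-s / x)) * (y⁻¹ * Real.exp (-s / y))) s := by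
    intro s
    have h : HasDerivAt (fun s : ℝ => -(c*s)) (-c) s := by
      simpa using ((hasDerivAt_id s).const_mul c).fun_neg
    have h2 := (h.exp).const_mul (-(c⁻¹ * x⁻¹ * y⁻¹))
    refine h2.congr_deriv ?_; symm
    have hexp : Real.exp (-s/x) * Real.exp (-s/y) = Real.exp (-(c*s)) := by
      rw [← Real.exp_add]; congr 1; rw [hc]; field_simp; ring
    have hcc : c⁻¹ * c = 1 := inv_mul_cancel₀ hcpos.ne'
    calc (x⁻¹ * Real.exp (-s/x)) * (y⁻¹ * Real.exp (-s/y))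
        = (x⁻¹ * y⁻¹) * (Real.exp (-s/x) * Real.exp (-s/y)) := by ring
      _ = (c⁻¹ * c) * ((x⁻¹ * y⁻¹) * Real.exp (-(c*s))) := by rw [hexp, hcc, one_mul]
      _ = -(c⁻¹ * x⁻¹ * y⁻¹) * (Real.exp (-(c*s)) * -c) := by ring
  have hcont : Continuous (fun s : ℝ => (x⁻¹ * Real.exp (-s / x)) * (y⁻¹ * Real.exp (-s / y))) := by
    continuity
  have hint := intervalIntegral.integral_eq_sub_of_hasDerivAt (fun s _ => hder s)
    (hcont.intervalIntegrable 0 T)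
  rw [hint]
  have hexpT : Real.exp (-(c*T)) = Real.exp (-(T*(x+y)/(x*y))) := by
    congr 1; rw [hc]; field_simp; ring
  have hxyc : x⁻¹ * y⁻¹ * c⁻¹ = (x+y)⁻¹ := by
    rw [← mul_inv, ← mul_inv]
    congr 1
    rw [hc]; field_simp; ring
  rw [mul_zero, neg_zero, Real.exp_zero, hexpT]
  calc (u*v/T) * (-(c⁻¹ * x⁻¹ * y⁻¹) * Real.exp (-(T*(x+y)/(x*y))) - -(c⁻¹ * x⁻¹ * y⁻¹) * 1)
      = (u*v/T) * (x⁻¹ * y⁻¹ * c⁻¹) * (1 - Real.exp (-(T*(x+y)/(x*y)))) := by ring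
    _ = _ := by rw [hxyc]


/-- For the exponential kernel, the quadratic kernel
`k_T^{(1)}(v,x;u,y) = (uv/T)(x+y)⁻¹(1-e^{-T(x+y)/(xy)})`, and with intensity
`ρ(dv)λ(dx)`, `λ(dx) = (2√π)⁻¹x^{-1/2}e^{-1/x}dx`, its squared `L²(ν²)` norm equals
`(K_ρ^{(2)})²/(16(2T²+3T+1))`. -/
theorem stmt17 (ρ : Measure ℝ) (hρ : IntegrableOn (fun v => v ^ 2) (Set.Ioi 0) ρ) :
    (∀ T v u x y : ℝ, 0 < x → 0 < y → 0 < T →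
      (u * v / T) * ∫ s in (0:ℝ)..T,
          (x⁻¹ * Real.exp (-s / x)) * (y⁻¹ * Real.exp (-s / y)) =
      (u * v / T) * (x + y)⁻¹ * (1 - Real.exp (-(T * (x + y) / (x * y))))) ∧
    (∀ T : ℝ, 0 < T →
      ∫ x in Set.Ioi (0:ℝ), ∫ y in Set.Ioi (0:ℝ),
        (∫ v in Set.Ioi (0:ℝ), v ^ 2 ∂ρ) * (∫ u in Set.Ioi (0:ℝ), u ^ 2 ∂ρ) *
          ((1 / T) * (x + y)⁻¹ * (1 - Real.exp (-(T * (x + y) / (x * y))))) ^ 2 *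
          ((2 * Real.sqrt Real.pi)⁻¹ * x ^ (-(1:ℝ)/2) * Real.exp (-1 / x)) *
          ((2 * Real.sqrt Real.pi)⁻¹ * y ^ (-(1:ℝ)/2) * Real.exp (-1 / y)) =
      (∫ v in Set.Ioi (0:ℝ), v ^ 2 ∂ρ) ^ 2 / (16 * (2 * T ^ 2 + 3 * T + 1))) := by
  constructor
  · intro T v u x y hx hy hT
    exact part1 hx hy hT
  · intro T hT
    have h1T : (0:ℝ) < 1 + T := by linarith
    have h2T : (0:ℝ) < 1 + 2*T := by linarith
    set K := ∫ v in Set.Ioi (0:ℝ), v ^ 2 ∂ρ with hK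
    have hinner : ∀ x ∈ Ioi (0:ℝ),
        (∫ y in Set.Ioi (0:ℝ), K * K *
          ((1 / T) * (x + y)⁻¹ * (1 - Real.exp (-(T * (x + y) / (x * y))))) ^ 2 *
          ((2 * Real.sqrt Real.pi)⁻¹ * x ^ (-(1:ℝ)/2) * Real.exp (-1 / x)) *
          ((2 * Real.sqrt Real.pi)⁻¹ * y ^ (-(1:ℝ)/2) * Real.exp (-1 / y)))
        = (K * K * (4*Real.pi*T^2)⁻¹) *
          ((∫ y in Ioi (0:ℝ), ψf 1 x y) - 2 * (∫ y in Ioi (0:ℝ), ψf (1+T) x y)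
            + (∫ y in Ioi (0:ℝ), ψf (1+2*T) x y)) := by
      intro x hx
      have hx0 : (0:ℝ) < x := hx
      have e : ∀ y ∈ Ioi (0:ℝ), K * K *
          ((1 / T) * (x + y)⁻¹ * (1 - Real.exp (-(T * (x + y) / (x * y))))) ^ 2 *
          ((2 * Real.sqrt Real.pi)⁻¹ * x ^ (-(1:ℝ)/2) * Real.exp (-1 / x)) *
          ((2 * Real.sqrt Real.pi)⁻¹ * y ^ (-(1:ℝ)/2) * Real.exp (-1 / y))
          = (K * K * (4*Real.pi*T^2)⁻¹) * (ψf 1 x y - 2 * ψf (1+T) x y + ψf (1+2*T) x y) := by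
        intro y hy
        have hy0 : (0:ℝ) < y := hy
        have hsp := split_point hT hx0 hy0
        calc K * K *
            ((1 / T) * (x + y)⁻¹ * (1 - Real.exp (-(T * (x + y) / (x * y))))) ^ 2 *
            ((2 * Real.sqrt Real.pi)⁻¹ * x ^ (-(1:ℝ)/2) * Real.exp (-1 / x)) *
            ((2 * Real.sqrt Real.pi)⁻¹ * y ^ (-(1:ℝ)/2) * Real.exp (-1 / y))
            = K * K * (((1 / T) * (x + y)⁻¹ * (1 - Real.exp (-(T * (x + y) / (x * y))))) ^ 2 *
              ((2 * Real.sqrt Real.pi)⁻¹ * x ^ (-(1:ℝ)/2) * Real.exp (-1 / x)) *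
              ((2 * Real.sqrt Real.pi)⁻¹ * y ^ (-(1:ℝ)/2) * Real.exp (-1 / y))) := by ring
          _ = K * K * ((4*Real.pi*T^2)⁻¹ * (ψf 1 x y - 2 * ψf (1+T) x y + ψf (1+2*T) x y)) := by
              rw [hsp]
          _ = _ := by ring
      rw [setIntegral_congr_fun measurableSet_Ioi e, MeasureTheory.integral_const_mul]
      congr 1
      have i1 : IntegrableOn (fun y => ψf 1 x y) (Ioi (0:ℝ)) := psi_intY one_pos hx0
      have i2 : IntegrableOn (fun y => 2 * ψf (1+T) x y) (Ioi (0:ℝ)) :=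
        (psi_intY h1T hx0).const_mul 2
      have i3 : IntegrableOn (fun y => ψf (1+2*T) x y) (Ioi (0:ℝ)) := psi_intY h2T hx0
      have S2 : (∫ y in Ioi (0:ℝ), (ψf 1 x y - 2 * ψf (1+T) x y + ψf (1+2*T) x y))
          = (∫ y in Ioi (0:ℝ), (ψf 1 x y - 2 * ψf (1+T) x y)) + ∫ y in Ioi (0:ℝ), ψf (1+2*T) x y :=
        integral_add (i1.sub i2) i3
      have S1 : (∫ y in Ioi (0:ℝ), (ψf 1 x y - 2 * ψf (1+T) x y))
          = (∫ y in Ioi (0:ℝ), ψf 1 x y) - ∫ y in Ioi (0:ℝ), 2 * ψf (1+T) x y :=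
        integral_sub i1 i2
      rw [S2, S1, MeasureTheory.integral_const_mul]
    rw [setIntegral_congr_fun measurableSet_Ioi hinner, MeasureTheory.integral_const_mul]
    have j1 : IntegrableOn (fun x => ∫ y in Ioi (0:ℝ), ψf 1 x y) (Ioi (0:ℝ)) := psi_intX one_pos
    have j2 : IntegrableOn (fun x => 2 * ∫ y in Ioi (0:ℝ), ψf (1+T) x y) (Ioi (0:ℝ)) :=
      (psi_intX h1T).const_mul 2
    have j3 : IntegrableOn (fun x => ∫ y in Ioi (0:ℝ), ψf (1+2*T) x y) (Ioi (0:ℝ)) := psi_intX h2T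
    have O2 : (∫ x in Ioi (0:ℝ), ((∫ y in Ioi (0:ℝ), ψf 1 x y) - 2 * (∫ y in Ioi (0:ℝ), ψf (1+T) x y) + ∫ y in Ioi (0:ℝ), ψf (1+2*T) x y))
        = (∫ x in Ioi (0:ℝ), ((∫ y in Ioi (0:ℝ), ψf 1 x y) - 2 * ∫ y in Ioi (0:ℝ), ψf (1+T) x y))
          + ∫ x in Ioi (0:ℝ), ∫ y in Ioi (0:ℝ), ψf (1+2*T) x y :=
      integral_add (j1.sub j2) j3
    have O1 : (∫ x in Ioi (0:ℝ), ((∫ y in Ioi (0:ℝ), ψf 1 x y) - 2 * ∫ y in Ioi (0:ℝ), ψf (1+T) x y))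
        = (∫ x in Ioi (0:ℝ), ∫ y in Ioi (0:ℝ), ψf 1 x y) - ∫ x in Ioi (0:ℝ), 2 * ∫ y in Ioi (0:ℝ), ψf (1+T) x y :=
      integral_sub j1 j2
    rw [O2, O1, MeasureTheory.integral_const_mul]
    rw [Phi one_pos, Phi h1T, Phi h2T]
    have hd : (2*T^2+3*T+1 : ℝ) ≠ 0 := by positivity
    have hpine : Real.pi ≠ 0 := Real.pi_ne_zero
    field_simp
    ring
end
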